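/- arXiv:1612.08946 — 2 statements merged into one kernel-verified Lean document; each statement's English description precedes it below -/
import Mathlib

section
/- Let n ≥ 0, let P be a nonzero polynomial of degree at most D in n+1 real variables, and let {O_i} be a family of pairwise disjoint open sets whose union is ℝ^{n+1} \ Z(P). If L ⊂ ℝ^{n+1} is a line not contained in Z(P), then L intersects at most D+1 of the sets O_i. -/
open Set

noncomputable section

/-- the line through `a` with direction `v` in `ℝ^{n+1}` -/
def lineThrough (n : ℕ) (a v : Fin (n+1) → ℝ) : Set (Fin (n+1) → ℝ) :=
  {z | ∃ s : ℝ, z = a + s • v}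

/-!
Restricted to the line `s ↦ a + s • v`, the polynomial `P` becomes a one-variable polynomial `Q`
of degree at most `D`, nonzero because the line leaves `Z(P)`; so the line minus `Z(P)` is `ℝ`
minus the at most `D` roots of `Q`. Pulled back to `ℝ`, the cells are disjoint open sets covering
the complement of the roots. Two points in different cells cannot be joined by a root-free
interval (it is connected), so the number of roots to the left of a point of a cell tells the
cells apart, and it takes at most `D + 1` values.
-/

open Function
open scoped Finset

theorem IsPreconnected.eq_of_mem_of_mem {α ι : Type*} [TopologicalSpace α] {K : Set α}
    (hK : IsPreconnected K) {U : ι → Set α} (hU : ∀ i, IsOpen (U i))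
    (hdisj : Pairwise (Disjoint on U)) (hKU : K ⊆ ⋃ i, U i) {i j : ι} {x y : α}
    (hxK : x ∈ K) (hx : x ∈ U i) (hyK : y ∈ K) (hy : y ∈ U j) : i = j := by
  by_contra hij
  have hcover : K ⊆ U i ∪ ⋃ (k) (_ : k ≠ i), U k := by
    intro z hz
    obtain ⟨k, hk⟩ := mem_iUnion.mp (hKU hz)
    by_cases hki : k = i
    · exact Or.inl (hki ▸ hk)
    · exact Or.inr (mem_biUnion hki hk)
  have hKi : K ⊆ U i :=
    hK.subset_left_of_subset_union (hU i) (isOpen_biUnion fun k _ => hU k)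
      (disjoint_iUnion₂_right.mpr fun k hk => hdisj (Ne.symm hk)) hcover ⟨x, hxK, hx⟩
  exact disjoint_left.mp (hdisj hij) (hKi hyK) hy

theorem Finset.card_filter_lt_lt_of_le_of_lt {α : Type*} [LinearOrder α] {R : Finset α}
    {x y r : α} (hr : r ∈ R) (hxr : x ≤ r) (hry : r < y) :
    #{r ∈ R | r < x} < #{r ∈ R | r < y} := by
  refine card_lt_card ((ssubset_iff_of_subset ?_).mpr ⟨r, ?_, ?_⟩)
  · exact monotone_filter_right R fun _ _ h => h.trans_le (hxr.trans hry.le)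
  · simp [hr, hry]
  · simp [hxr]

section CellsOfFinsetComplement

variable {α ι : Type*} [ConditionallyCompleteLinearOrder α] [TopologicalSpace α]
  [OrderTopology α] [DenselyOrdered α] {R : Finset α} {U : ι → Set α}

theorem card_filter_lt_lt_of_mem_of_mem (hU : ∀ i, IsOpen (U i))
    (hdisj : Pairwise (Disjoint on U)) (hunion : ⋃ i, U i = (↑R)ᶜ) {i j : ι} {x y : α}
    (hx : x ∈ U i) (hy : y ∈ U j) (hxy : x ≤ y) (hij : i ≠ j) :
    #{r ∈ R | r < x} < #{r ∈ R | r < y} := by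
  have hgap : ¬ Icc x y ⊆ ⋃ i, U i := fun h =>
    hij (isPreconnected_Icc.eq_of_mem_of_mem hU hdisj h (left_mem_Icc.2 hxy) hx
      (right_mem_Icc.2 hxy) hy)
  obtain ⟨r, ⟨hxr, hry⟩, hr⟩ := not_subset.mp hgap
  rw [hunion, notMem_compl_iff, Finset.mem_coe] at hr
  have hyR : y ∈ (↑R : Set α)ᶜ := hunion ▸ mem_iUnion_of_mem j hy
  exact Finset.card_filter_lt_lt_of_le_of_lt hr hxr (hry.lt_of_ne fun h => hyR (h ▸ hr))

theorem finite_and_ncard_nonempty_le_of_iUnion_eq_compl (hU : ∀ i, IsOpen (U i))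
    (hdisj : Pairwise (Disjoint on U)) (hunion : ⋃ i, U i = (↑R)ᶜ) :
    {i | (U i).Nonempty}.Finite ∧ {i | (U i).Nonempty}.ncard ≤ #R + 1 := by
  let rank : {i | (U i).Nonempty} → Fin (#R + 1) := fun i =>
    ⟨#{r ∈ R | r < i.2.some}, Nat.lt_succ_of_le (Finset.card_filter_le _ _)⟩
  have hrank : Injective rank := by
    rintro ⟨i, hi⟩ ⟨j, hj⟩ hij
    simp only [rank, Fin.mk.injEq] at hij
    refine Subtype.ext (of_not_not fun hne : i ≠ j => ?_)
    rcases le_total hi.some hj.some with h | h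
    · exact (card_filter_lt_lt_of_mem_of_mem hU hdisj hunion hi.some_mem hj.some_mem h hne).ne hij
    · exact (card_filter_lt_lt_of_mem_of_mem hU hdisj hunion hj.some_mem hi.some_mem h
        hne.symm).ne' hij
  have : Finite {i | (U i).Nonempty} := Finite.of_injective rank hrank
  refine ⟨toFinite _, ?_⟩
  simpa using Nat.card_le_card_of_injective rank hrank

end CellsOfFinsetComplement

namespace MvPolynomial

variable {σ R : Type*} [CommSemiring R]

def restrictToLine (a v : σ → R) (P : MvPolynomial σ R) : Polynomial R :=
  aeval (fun j => Polynomial.C (v j) * Polynomial.X + Polynomial.C (a j)) P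

theorem eval_restrictToLine (a v : σ → R) (P : MvPolynomial σ R) (s : R) :
    (P.restrictToLine a v).eval s = eval (a + s • v) P := by
  rw [restrictToLine, ← Polynomial.coe_aeval_eq_eval, comp_aeval_apply]
  change _ = aeval (a + s • v) P
  congr with j
  simp only [map_add, map_mul, Polynomial.aeval_C, Polynomial.aeval_X, Pi.add_apply,
    Pi.smul_apply, smul_eq_mul, Algebra.algebraMap_self, RingHom.id_apply]
  ring

theorem natDegree_restrictToLine_le (a v : σ → R) (P : MvPolynomial σ R) :
    (P.restrictToLine a v).natDegree ≤ P.totalDegree :=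
  (aeval_natDegree_le P le_rfl _ fun _ => Polynomial.natDegree_linear_le).trans_eq (mul_one _)

end MvPolynomial

theorem lineThrough_eq_range (n : ℕ) (a v : Fin (n+1) → ℝ) :
    lineThrough n a v = range fun s : ℝ => a + s • v := by
  ext z
  simp [lineThrough, eq_comm]

theorem stmt10_general (n D : ℕ) (P : MvPolynomial (Fin (n+1)) ℝ)
    (hdeg : P.totalDegree ≤ D) {ι : Type*} (O : ι → Set (Fin (n+1) → ℝ))
    (hopen : ∀ i, IsOpen (O i)) (hdisj : Pairwise (Function.onFun Disjoint O))
    (hunion : (⋃ i, O i) = {z | MvPolynomial.eval z P ≠ 0})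
    (a v : Fin (n+1) → ℝ)
    (hL : ¬ lineThrough n a v ⊆ {z | MvPolynomial.eval z P = 0}) :
    {i : ι | (O i ∩ lineThrough n a v).Nonempty}.Finite ∧
      {i : ι | (O i ∩ lineThrough n a v).Nonempty}.ncard ≤ D + 1 := by
  set Q := P.restrictToLine a v with hQdef
  let φ : ℝ → Fin (n+1) → ℝ := fun s => a + s • v
  have hQ : Q ≠ 0 := by
    obtain ⟨_, ⟨s, rfl⟩, hs⟩ := not_subset.mp hL
    intro h
    apply hs
    change MvPolynomial.eval (a + s • v) P = 0
    rw [← MvPolynomial.eval_restrictToLine, ← hQdef, h, Polynomial.eval_zero]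
  have hroots : #Q.roots.toFinset ≤ D := (Multiset.toFinset_card_le _).trans <|
    (Polynomial.card_roots' Q).trans ((MvPolynomial.natDegree_restrictToLine_le a v P).trans hdeg)
  have hunion' : ⋃ i, φ ⁻¹' O i = (↑Q.roots.toFinset)ᶜ := by
    ext s
    simp [φ, ← preimage_iUnion, hunion, Q, MvPolynomial.eval_restrictToLine, hQ]
  simp only [lineThrough_eq_range, ← nonempty_preimage_iff]
  obtain ⟨hfin, hcard⟩ := finite_and_ncard_nonempty_le_of_iUnion_eq_compl
    (fun i => (hopen i).preimage (by fun_prop)) (fun i j hij => (hdisj hij).preimage φ) hunion'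
  exact ⟨hfin, hcard.trans (by omega)⟩

/-- **A line meets at most `D+1` cells of a degree-`D` polynomial partition (Lemma 5.1).**
Let `P ≠ 0` have degree at most `D` and let `{O_i}` be pairwise disjoint open sets with
`⋃ O_i = ℝ^{n+1} ∖ Z(P)`.  If a line `L` is not contained in `Z(P)`, then `L` intersects at
most `D+1` of the sets `O_i`. -/
theorem stmt10 (n D : ℕ) (P : MvPolynomial (Fin (n+1)) ℝ) (hP : P ≠ 0)
    (hdeg : P.totalDegree ≤ D) {ι : Type*} (O : ι → Set (Fin (n+1) → ℝ))
    (hopen : ∀ i, IsOpen (O i)) (hdisj : Pairwise (Function.onFun Disjoint O))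
    (hunion : (⋃ i, O i) = {z | MvPolynomial.eval z P ≠ 0})
    (a v : Fin (n+1) → ℝ) (hv : v ≠ 0)
    (hL : ¬ lineThrough n a v ⊆ {z | MvPolynomial.eval z P = 0}) :
    {i : ι | (O i ∩ lineThrough n a v).Nonempty}.Finite ∧
      {i : ι | (O i ∩ lineThrough n a v).Nonempty}.ncard ≤ D + 1 :=
  stmt10_general n D P hdeg O hopen hdisj hunion a v hL
end
end

section
/- Let K ≥ 1, ε ∈ (0,1), r > 0, C₀ ≥ 1, and let T be a finite set of points in ℝ² such that every subset of T whose points have pairwise distances < r has at most C₀ elements. For each τ ∈ T let u_τ, g_τ, h_τ be complex numbers with u_τ = g_τ + h_τ, and set u = Σ_{τ∈T} u_τ. Assume max_{τ∈T} |u_τ| ≤ K^{-ε⁴} |u|, C₀ K^{-ε⁴} ≤ 1/10, and |T| K^{-10} ≤ 1/10. Then there exists a subset I ⊆ T such that |u| ≤ 10 ( |Σ_{τ∈I} h_τ| + K^{10} max_{τ₁,τ₂ ∈ T, |τ₁−τ₂| ≥ r} |g_{τ₁}|^{1/2} |g_{τ₂}|^{1/2} ). -/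
open scoped NNReal

noncomputable section

abbrev E2 : Type := EuclideanSpace ℝ (Fin 2)

/-!
Threshold at `c = K^{-10}|u|`. If two `r`-separated points `τ₁, τ₂` both have `|g_τ| > c`, then
`c ≤ Bil(g)`, so `|u| = K^{10} c ≤ K^{10} Bil(g)`. Otherwise the points with `|g_τ| > c` are pairwise
`r`-close, hence at most `C₀` of them, and their `u_τ` contribute at most `C₀ K^{-ε⁴}|u| ≤ |u|/10`;
on the remaining set `I` the `g_τ` add up to at most `|T| c ≤ |u|/10`, so `|u| ≤ |Σ_I h_τ| + |u|/5`.
-/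

open Finset

theorem norm_sum_le_of_split_by_threshold {ι E : Type*} [SeminormedAddCommGroup E]
    (T : Finset ι) {u g h : ι → E} (hugh : ∀ τ ∈ T, u τ = g τ + h τ) {c : ℝ} (hc : 0 ≤ c) :
    ‖∑ τ ∈ T, u τ‖ ≤
      ‖∑ τ ∈ T with ‖g τ‖ ≤ c, h τ‖ + T.card * c + ∑ τ ∈ T with c < ‖g τ‖, ‖u τ‖ := by
  set I := T.filter (fun τ => ‖g τ‖ ≤ c)
  have hsplit : ∑ τ ∈ T, u τ = ∑ τ ∈ I, g τ + ∑ τ ∈ I, h τ + ∑ τ ∈ T with c < ‖g τ‖, u τ := by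
    rw [← sum_add_distrib, ← sum_filter_add_sum_filter_not T (fun τ => ‖g τ‖ ≤ c)]
    simp only [not_le]
    congr 1
    exact sum_congr rfl fun τ hτ => hugh τ (mem_filter.1 hτ).1
  have hg : ‖∑ τ ∈ I, g τ‖ ≤ T.card * c :=
    calc ‖∑ τ ∈ I, g τ‖ ≤ I.card * c := by
          simpa using norm_sum_le_of_le I fun τ hτ => (mem_filter.1 hτ).2
      _ ≤ T.card * c := by gcongr; exact filter_subset _ _
  calc ‖∑ τ ∈ T, u τ‖
      ≤ ‖∑ τ ∈ I, g τ‖ + ‖∑ τ ∈ I, h τ‖ + ‖∑ τ ∈ T with c < ‖g τ‖, u τ‖ := by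
        rw [hsplit]; exact norm_add₃_le
    _ ≤ _ := by linarith [norm_sum_le (T.filter fun τ => c < ‖g τ‖) u]

section

variable {ι E : Type*} [PseudoMetricSpace ι] [SeminormedAddCommGroup E]

-- The paper's `Bil(g)`.
def bilinearMax (T : Finset ι) (r : ℝ) (g : ι → E) : ℝ≥0 :=
  ((T ×ˢ T).filter (fun q => r ≤ dist q.1 q.2)).sup
    (fun q => ‖g q.1‖₊ ^ ((1:ℝ)/2) * ‖g q.2‖₊ ^ ((1:ℝ)/2))

theorem min_nnnorm_le_bilinearMax {T : Finset ι} {r : ℝ} (g : ι → E) {τ₁ τ₂ : ι}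
    (hτ₁ : τ₁ ∈ T) (hτ₂ : τ₂ ∈ T) (hr : r ≤ dist τ₁ τ₂) :
    min ‖g τ₁‖₊ ‖g τ₂‖₊ ≤ bilinearMax T r g := by
  set m := min ‖g τ₁‖₊ ‖g τ₂‖₊
  calc m = m ^ ((1:ℝ)/2) * m ^ ((1:ℝ)/2) := by
        rw [← NNReal.sqrt_eq_rpow, NNReal.mul_self_sqrt]
    _ ≤ ‖g τ₁‖₊ ^ ((1:ℝ)/2) * ‖g τ₂‖₊ ^ ((1:ℝ)/2) := by
        gcongr
        · exact min_le_left _ _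
        · exact min_le_right _ _
    _ ≤ bilinearMax T r g :=
        le_sup (f := fun q : ι × ι => ‖g q.1‖₊ ^ ((1:ℝ)/2) * ‖g q.2‖₊ ^ ((1:ℝ)/2))
          (mem_filter.2 ⟨mem_product.2 ⟨hτ₁, hτ₂⟩, hr⟩ : (τ₁, τ₂) ∈ _)

theorem le_bilinearMax_or_pairwise_dist_lt (T : Finset ι) (r : ℝ) (g : ι → E) (c : ℝ) :
    c ≤ bilinearMax T r g ∨
      ∀ τ₁ ∈ T.filter (fun τ => c < ‖g τ‖), ∀ τ₂ ∈ T.filter (fun τ => c < ‖g τ‖),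
        dist τ₁ τ₂ < r := by
  by_contra! ⟨hlt, τ₁, hτ₁, τ₂, hτ₂, hr⟩
  rw [mem_filter] at hτ₁ hτ₂
  have := NNReal.coe_le_coe.2 (min_nnnorm_le_bilinearMax g hτ₁.1 hτ₂.1 hr)
  push_cast at this
  exact hlt.not_ge ((le_min hτ₁.2.le hτ₂.2.le).trans this)

end

theorem stmt11_general (K ε r C₀ : ℝ) (hK : 1 ≤ K) (T : Finset E2)
    (hsep : ∀ S ⊆ T, (∀ τ₁ ∈ S, ∀ τ₂ ∈ S, dist τ₁ τ₂ < r) → (S.card : ℝ) ≤ C₀)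
    (u g h : E2 → ℂ) (hugh : ∀ τ ∈ T, u τ = g τ + h τ)
    (hmax : ∀ τ ∈ T, ‖u τ‖ ≤ K ^ (-(ε ^ 4)) * ‖∑ τ' ∈ T, u τ'‖)
    (hC : C₀ * K ^ (-(ε ^ 4)) ≤ 1/10)
    (hT : (T.card : ℝ) * K ^ (-(10:ℝ)) ≤ 1/10) :
    ∃ I ⊆ T,
      ‖∑ τ' ∈ T, u τ'‖ ≤
        10 * (‖∑ τ' ∈ I, h τ'‖ +
          K ^ (10:ℝ) *
            (((T ×ˢ T).filter (fun q => r ≤ dist q.1 q.2)).sup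
              (fun q => ‖g q.1‖₊ ^ ((1:ℝ)/2) * ‖g q.2‖₊ ^ ((1:ℝ)/2)) : ℝ≥0)) := by
  change ∃ I ⊆ T, _ ≤ 10 * (_ + K ^ (10:ℝ) * (bilinearMax T r g : ℝ))
  set U := ‖∑ τ ∈ T, u τ‖
  set c := K ^ (-(10:ℝ)) * U
  have hK0 : 0 < K := zero_lt_one.trans_le hK
  have hc : 0 ≤ c := by positivity
  have hKc : K ^ (10:ℝ) * c = U := by
    rw [← mul_assoc, ← Real.rpow_add hK0, add_neg_cancel, Real.rpow_zero, one_mul]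
  have hU : 0 ≤ U := norm_nonneg _
  have hbil : 0 ≤ K ^ (10:ℝ) * bilinearMax T r g := by positivity
  rcases le_bilinearMax_or_pairwise_dist_lt T r g c with hcB | hclose
  · refine ⟨∅, empty_subset T, ?_⟩
    have : U ≤ K ^ (10:ℝ) * bilinearMax T r g := hKc ▸ by gcongr
    simp only [sum_empty, norm_zero, zero_add]
    linarith
  · refine ⟨T.filter fun τ => ‖g τ‖ ≤ c, filter_subset _ _, ?_⟩
    have hlarge : ∑ τ ∈ T with c < ‖g τ‖, ‖u τ‖ ≤ U / 10 :=
      calc ∑ τ ∈ T with c < ‖g τ‖, ‖u τ‖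
          ≤ (T.filter fun τ => c < ‖g τ‖).card * (K ^ (-(ε ^ 4)) * U) := by
            simpa using sum_le_card_nsmul _ _ _ fun τ hτ => hmax τ (mem_filter.1 hτ).1
        _ ≤ C₀ * (K ^ (-(ε ^ 4)) * U) := by
            gcongr; exact hsep _ (filter_subset _ _) hclose
        _ ≤ U / 10 := by rw [← mul_assoc]; linarith [mul_le_mul_of_nonneg_right hC hU]
    have hsmall : (T.card : ℝ) * c ≤ U / 10 := by
      rw [← mul_assoc]; linarith [mul_le_mul_of_nonneg_right hT hU]
    have hsplit : U ≤ _ := norm_sum_le_of_split_by_threshold T hugh hc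
    linarith

/-- **Abstract pigeonholing content of the wall-decomposition lemma (Lemma 6.2).**
Let `T` be a finite set of points of `ℝ²` such that any subset with pairwise distances `< r`
has at most `C₀` elements, and let `u_τ = g_τ + h_τ` with `u = Σ_{τ∈T} u_τ`.  If
`max_τ |u_τ| ≤ K^{-ε⁴}|u|`, `C₀ K^{-ε⁴} ≤ 1/10` and `|T| K^{-10} ≤ 1/10`, then there is
`I ⊆ T` with `|u| ≤ 10 (|Σ_{τ∈I} h_τ| + K^{10} max_{τ₁,τ₂∈T, |τ₁-τ₂|≥r} |g_{τ₁}|^{1/2}|g_{τ₂}|^{1/2})`. -/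
theorem stmt11 (K ε r C₀ : ℝ) (hK : 1 ≤ K) (hε : 0 < ε) (hε1 : ε < 1) (hr : 0 < r)
    (hC₀ : 1 ≤ C₀) (T : Finset E2)
    (hsep : ∀ S ⊆ T, (∀ τ₁ ∈ S, ∀ τ₂ ∈ S, dist τ₁ τ₂ < r) → (S.card : ℝ) ≤ C₀)
    (u g h : E2 → ℂ) (hugh : ∀ τ ∈ T, u τ = g τ + h τ)
    (hmax : ∀ τ ∈ T, ‖u τ‖ ≤ K ^ (-(ε ^ 4)) * ‖∑ τ' ∈ T, u τ'‖)
    (hC : C₀ * K ^ (-(ε ^ 4)) ≤ 1/10)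
    (hT : (T.card : ℝ) * K ^ (-(10:ℝ)) ≤ 1/10) :
    ∃ I ⊆ T,
      ‖∑ τ' ∈ T, u τ'‖ ≤
        10 * (‖∑ τ' ∈ I, h τ'‖ +
          K ^ (10:ℝ) *
            (((T ×ˢ T).filter (fun q => r ≤ dist q.1 q.2)).sup
              (fun q => ‖g q.1‖₊ ^ ((1:ℝ)/2) * ‖g q.2‖₊ ^ ((1:ℝ)/2)) : ℝ≥0)) :=
  stmt11_general K ε r C₀ hK T hsep u g h hugh hmax hC hT

end
end
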